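/- Let X be a random variable distributed according to an offspring law with pgf f satisfying p_0 > 0 and μ_f ≤ 1, and let Y be the total progeny of the corresponding Galton–Watson process with unit initial population. Define the Cramér rate functions I_f(x) = sup_{α ∈ ℝ} {αx − log f(e^α)} and I_G(y) = sup_{β ∈ ℝ} {βy − log G(e^β)}, where G is the pgf of Y. Then for all y ≥ 1, I_G(y) = y · I_f((y−1)/y). -/

import Mathlib

/-!
Put `s = e^β` and `t = G(s) = e^α`. The functional equation `G(s) = s f(G(s))` gives
`log f(e^α) = α - β`, and then `β y - log G(e^β) = y (α (y - 1) / y - log f(e^α))`, so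
`I_G(y) ≤ y I_f((y - 1) / y)`. Conversely, given `α` with `f(e^α) < ∞`, put
`s = e^α / f(e^α)`: as `G(s)` is the least `u` with `s f(u) ≤ u`, `log G(s) ≤ α`, which gives the
reverse inequality.

Both facts are needed for all `s ∈ [0, ∞]`, whereas the equation is only assumed on `[0, 1]`.
There it pins down the coefficients of `G` (power series with bounded coefficients that agree on
`(0, 1)` coincide), which gives the recursion `Y = 1 + Y₁ + ⋯ + Y_X` coefficientwise. The
recursion yields the equation for all `s` and, by induction on the partial sums of `G(s)`, its
minimality.
-/

open scoped ENNReal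
open Real

/-- The probability generating function of a distribution `p` on ℕ, evaluated in `ℝ≥0∞`. -/
noncomputable def pgf (p : ℕ → ℝ≥0∞) (x : ℝ≥0∞) : ℝ≥0∞ := ∑' h : ℕ, x ^ h * p h

/-- The Cramér rate function of the law `p` on ℕ:
`I_p(x) = sup_{α ∈ ℝ} {α x - log (∑_h e^{α h} p_h)}`, with values in `[0, ∞]` inside `EReal`. -/
noncomputable def cramerRate (p : ℕ → ℝ≥0∞) (x : ℝ) : EReal :=
  ⨆ α : ℝ, (((α * x : ℝ) : EReal) - ENNReal.log (pgf p (ENNReal.ofReal (Real.exp α))))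

open PowerSeries Finset

theorem ENNReal.tsum_mul_tsum_eq_tsum_sum_antidiagonal (f g : ℕ → ℝ≥0∞) :
    (∑' n, f n) * ∑' n, g n = ∑' n, ∑ kl ∈ antidiagonal n, f kl.1 * g kl.2 := by
  simp_rw [← Finset.tsum_subtype (antidiagonal _) (fun kl => f kl.1 * g kl.2)]
  rw [← ENNReal.tsum_sigma' (fun x : Σ n : ℕ, antidiagonal n => f x.2.1.1 * g x.2.1.2),
    ← ENNReal.tsum_mul_right]
  simp_rw [← ENNReal.tsum_mul_left]
  rw [← ENNReal.tsum_prod]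
  exact (HasAntidiagonal.sigmaAntidiagonalEquivProd.tsum_eq (fun kl => f kl.1 * g kl.2)).symm

theorem ENNReal.log_ofReal_exp (α : ℝ) : ENNReal.log (ENNReal.ofReal (exp α)) = α := by
  rw [ENNReal.log_ofReal_of_pos (exp_pos α), Real.log_exp]

theorem ENNReal.ofReal_exp_sub (α β : ℝ) :
    ENNReal.ofReal (exp (α - β)) = ENNReal.ofReal (exp α) / ENNReal.ofReal (exp β) := by
  rw [Real.exp_sub, ENNReal.ofReal_div_of_pos (exp_pos β)]

theorem ENNReal.exists_ofReal_exp_eq {t : ℝ≥0∞} (h0 : t ≠ 0) (htop : t ≠ ⊤) :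
    ∃ α : ℝ, ENNReal.ofReal (exp α) = t :=
  ⟨Real.log t.toReal, by rw [Real.exp_log (ENNReal.toReal_pos h0 htop), ENNReal.ofReal_toReal htop]⟩

theorem pgf_one (a : ℕ → ℝ≥0∞) : pgf a 1 = ∑' k, a k := by
  simp [pgf]

theorem pgf_mono (a : ℕ → ℝ≥0∞) : Monotone (pgf a) :=
  fun _ _ hst => ENNReal.tsum_le_tsum fun _ => by gcongr

theorem pgf_ne_zero {a : ℕ → ℝ≥0∞} {s : ℝ≥0∞} (ha : a ≠ 0) (hs : s ≠ 0) : pgf a s ≠ 0 := by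
  obtain ⟨k, hk⟩ := Function.ne_iff.mp ha
  exact (ENNReal.mul_pos (pow_ne_zero k hs) hk).trans_le (ENNReal.le_tsum k) |>.ne'

theorem pgf_eq_add_mul_pgf_succ (a : ℕ → ℝ≥0∞) (s : ℝ≥0∞) :
    pgf a s = a 0 + s * pgf (fun k => a (k + 1)) s := by
  rw [pgf, tsum_eq_zero_add' ENNReal.summable, pgf, ← ENNReal.tsum_mul_left]
  simp only [pow_zero, one_mul, pow_succ', mul_assoc]

theorem pgf_le_add_two_mul {a : ℕ → ℝ≥0∞} (ha : ∀ k, a k ≤ 1) {s : ℝ≥0∞} (hs : s ≤ 2⁻¹) :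
    pgf a s ≤ a 0 + 2 * s := by
  rw [pgf_eq_add_mul_pgf_succ, mul_comm 2]
  gcongr
  calc pgf (fun k => a (k + 1)) s ≤ ∑' k, s ^ k :=
        ENNReal.tsum_le_tsum fun k => mul_le_of_le_one_right' (ha _)
    _ = (1 - s)⁻¹ := ENNReal.tsum_geometric s
    _ ≤ 2 := by
        rw [ENNReal.inv_le_iff_inv_le, ← ENNReal.one_sub_inv_two]
        exact tsub_le_tsub_left hs 1

theorem coeff_zero_le_of_pgf_eq {a b : ℕ → ℝ≥0∞} (hb : ∀ k, b k ≤ 1)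
    (h : ∀ s, 0 < s → s < 1 → pgf a s = pgf b s) : a 0 ≤ b 0 := by
  refine ENNReal.le_of_forall_pos_le_add fun ε hε _ => ?_
  set s : ℝ≥0∞ := min 2⁻¹ (ε / 2)
  have hs0 : 0 < s :=
    lt_min (by norm_num) (ENNReal.div_pos (by exact_mod_cast hε.ne') (by norm_num))
  have hs2 : s ≤ 2⁻¹ := min_le_left _ _
  calc a 0 ≤ pgf a s := by rw [pgf_eq_add_mul_pgf_succ]; exact le_self_add
    _ = pgf b s := h s hs0 (hs2.trans_lt (by norm_num))
    _ ≤ b 0 + 2 * s := pgf_le_add_two_mul hb hs2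
    _ ≤ b 0 + 2 * (ε / 2) := by gcongr; exact min_le_right _ _
    _ = b 0 + ε := by rw [ENNReal.mul_div_cancel (by norm_num) (by norm_num)]

theorem coeff_zero_eq_of_pgf_eq {a b : ℕ → ℝ≥0∞} (ha : ∀ k, a k ≤ 1) (hb : ∀ k, b k ≤ 1)
    (h : ∀ s, 0 < s → s < 1 → pgf a s = pgf b s) : a 0 = b 0 :=
  le_antisymm (coeff_zero_le_of_pgf_eq hb h)
    (coeff_zero_le_of_pgf_eq ha fun s hs0 hs1 => (h s hs0 hs1).symm)

theorem eq_of_pgf_eq {a b : ℕ → ℝ≥0∞} (ha : ∀ k, a k ≤ 1) (hb : ∀ k, b k ≤ 1)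
    (h : ∀ s, 0 < s → s < 1 → pgf a s = pgf b s) : a = b := by
  funext n
  induction n generalizing a b with
  | zero => exact coeff_zero_eq_of_pgf_eq ha hb h
  | succ n ih =>
    refine ih (a := fun k => a (k + 1)) (b := fun k => b (k + 1)) (fun k => ha _) (fun k => hb _)
      fun s hs0 hs1 => ?_
    have hab := h s hs0 hs1
    rw [pgf_eq_add_mul_pgf_succ a, pgf_eq_add_mul_pgf_succ b, coeff_zero_eq_of_pgf_eq ha hb h,
      ENNReal.add_right_inj (ne_top_of_le_ne_top ENNReal.one_ne_top (hb 0))] at hab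
    exact (ENNReal.mul_right_inj hs0.ne' (hs1.trans ENNReal.one_lt_top).ne).mp hab

theorem pgf_coeff_mul (F G : ℝ≥0∞⟦X⟧) (s : ℝ≥0∞) :
    pgf (fun n => coeff n (F * G)) s = pgf (fun n => coeff n F) s * pgf (fun n => coeff n G) s := by
  rw [pgf, pgf, pgf, ENNReal.tsum_mul_tsum_eq_tsum_sum_antidiagonal]
  refine tsum_congr fun n => ?_
  rw [coeff_mul, mul_sum]
  refine sum_congr rfl fun kl hkl => ?_
  rw [← mem_antidiagonal.mp hkl, pow_add]
  ring

theorem pgf_coeff_pow (F : ℝ≥0∞⟦X⟧) (s : ℝ≥0∞) (h : ℕ) :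
    pgf (fun n => coeff n (F ^ h)) s = pgf (fun n => coeff n F) s ^ h := by
  induction h with
  | zero => simp [pgf, coeff_one]
  | succ h ih => rw [pow_succ, pgf_coeff_mul, ih, pow_succ]

theorem pgf_coeff_trunc (F : ℝ≥0∞⟦X⟧) (n : ℕ) (s : ℝ≥0∞) :
    pgf (fun k => coeff k (trunc n F : ℝ≥0∞⟦X⟧)) s = ∑ k ∈ range n, s ^ k * coeff k F := by
  rw [pgf, tsum_eq_sum (s := range n) fun k hk => by simp_all [coeff_trunc]]
  exact sum_congr rfl fun k hk => by simp_all [coeff_trunc]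

theorem sum_range_pow_mul_coeff_pow_le (F : ℝ≥0∞⟦X⟧) (n h : ℕ) (s : ℝ≥0∞) :
    ∑ k ∈ range n, s ^ k * coeff k (F ^ h) ≤ (∑ k ∈ range n, s ^ k * coeff k F) ^ h := by
  set T : ℝ≥0∞⟦X⟧ := (trunc n F : ℝ≥0∞⟦X⟧)
  calc ∑ k ∈ range n, s ^ k * coeff k (F ^ h) = ∑ k ∈ range n, s ^ k * coeff k (T ^ h) := by
        refine sum_congr rfl fun k hk => ?_
        have := congrArg (Polynomial.coeff · k) (trunc_trunc_pow F n h)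
        simp only [coeff_trunc, mem_range.mp hk, if_true] at this
        rw [this]
    _ ≤ pgf (fun k => coeff k (T ^ h)) s := ENNReal.sum_le_tsum _
    _ = (∑ k ∈ range n, s ^ k * coeff k F) ^ h := by rw [pgf_coeff_pow, pgf_coeff_trunc]

/-- `compound p q` is the law of `Y₁ + ⋯ + Y_X` for `X ∼ p` and independent `Yᵢ ∼ q`. -/
noncomputable def compound (p q : ℕ → ℝ≥0∞) (k : ℕ) : ℝ≥0∞ :=
  ∑' h, p h * coeff k (mk q ^ h)

theorem pgf_compound (p q : ℕ → ℝ≥0∞) (s : ℝ≥0∞) : pgf (compound p q) s = pgf p (pgf q s) :=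
  calc pgf (compound p q) s = ∑' h, p h * pgf (fun k => coeff k (mk q ^ h)) s := by
        simp_rw [pgf, compound, ← ENNReal.tsum_mul_left]
        rw [ENNReal.tsum_comm]
        simp only [mul_left_comm]
    _ = pgf p (pgf q s) := by
        simp_rw [pgf_coeff_pow, coeff_mk, pgf, mul_comm]

theorem sum_range_pow_mul_compound_le (p q : ℕ → ℝ≥0∞) (n : ℕ) (s : ℝ≥0∞) :
    ∑ k ∈ range n, s ^ k * compound p q k ≤ pgf p (∑ k ∈ range n, s ^ k * q k) :=
  calc ∑ k ∈ range n, s ^ k * compound p q k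
        = ∑' h, p h * ∑ k ∈ range n, s ^ k * coeff k (mk q ^ h) := by
        simp_rw [compound, ← ENNReal.tsum_mul_left, mul_sum]
        rw [Summable.tsum_finsetSum fun _ _ => ENNReal.summable]
        simp only [mul_left_comm]
    _ ≤ ∑' h, p h * (∑ k ∈ range n, s ^ k * q k) ^ h := by
        gcongr with h
        simpa only [coeff_mk] using sum_range_pow_mul_coeff_pow_le (mk q) n h s
    _ = pgf p (∑ k ∈ range n, s ^ k * q k) := by simp_rw [pgf, mul_comm]

def IsTotalProgenyLaw (p q : ℕ → ℝ≥0∞) : Prop :=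
  q 0 = 0 ∧ ∀ k, q (k + 1) = compound p q k

namespace IsTotalProgenyLaw

variable {p q : ℕ → ℝ≥0∞}

theorem of_pgf_eq (hp : ∑' h, p h = 1) (hq : ∑' k, q k = 1)
    (hfe : ∀ s ≤ 1, pgf q s = s * pgf p (pgf q s)) : IsTotalProgenyLaw p q := by
  set d : ℕ → ℝ≥0∞ := fun k => Nat.casesOn k 0 (compound p q)
  have hd : ∀ s, pgf d s = s * pgf p (pgf q s) := fun s => by
    rw [pgf_eq_add_mul_pgf_succ, ← pgf_compound]
    exact zero_add _
  have hd1 : ∑' k, d k = 1 := by rw [← pgf_one, hd, pgf_one, hq, pgf_one, hp, one_mul]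
  have hqd : q = d :=
    eq_of_pgf_eq (fun k => hq ▸ ENNReal.le_tsum k) (fun k => hd1 ▸ ENNReal.le_tsum k)
      fun s _ hs1 => (hfe s hs1.le).trans (hd s).symm
  exact ⟨congrFun hqd 0, fun k => congrFun hqd (k + 1)⟩

theorem pgf_eq (h : IsTotalProgenyLaw p q) (s : ℝ≥0∞) : pgf q s = s * pgf p (pgf q s) := by
  have hsucc : (fun k => q (k + 1)) = compound p q := funext h.2
  conv_lhs => rw [pgf_eq_add_mul_pgf_succ, h.1, zero_add, hsucc, pgf_compound]

theorem pgf_le_of_mul_pgf_le (h : IsTotalProgenyLaw p q) {s u : ℝ≥0∞} (hu : s * pgf p u ≤ u) :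
    pgf q s ≤ u := by
  rw [pgf, ENNReal.tsum_eq_iSup_nat]
  refine iSup_le fun n => ?_
  induction n with
  | zero => simp
  | succ n ih =>
    calc ∑ k ∈ range (n + 1), s ^ k * q k = s * ∑ k ∈ range n, s ^ k * compound p q k := by
          simp only [sum_range_succ', h.1, h.2, mul_zero, add_zero, mul_sum, pow_succ', mul_assoc]
      _ ≤ s * pgf p u := by
          gcongr
          exact (sum_range_pow_mul_compound_le p q n s).trans (pgf_mono p ih)
      _ ≤ u := hu

end IsTotalProgenyLaw

theorem EReal.coe_mul_sub_eq_mul (y α β : ℝ) (hy : y ≠ 0) :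
    ((β * y : ℝ) : EReal) - α =
      y * (((α * ((y - 1) / y) : ℝ) : EReal) - ((α - β : ℝ) : EReal)) := by
  norm_cast
  field_simp
  ring

section CramerRate

variable {p q : ℕ → ℝ≥0∞} {y : ℝ}

theorem cramerRate_le_mul_cramerRate (hfix : ∀ s, pgf q s = s * pgf p (pgf q s))
    (hq : ∀ s, s ≠ 0 → pgf q s ≠ 0) (hy : 0 < y) :
    cramerRate q y ≤ y * cramerRate p ((y - 1) / y) := by
  refine iSup_le fun β => ?_
  set s := ENNReal.ofReal (exp β)
  have hs : s ≠ 0 := by positivity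
  rcases eq_or_ne (pgf q s) ⊤ with htop | htop
  · simp [htop]
  obtain ⟨α, hα⟩ := ENNReal.exists_ofReal_exp_eq (hq s hs) htop
  have hf : pgf p (ENNReal.ofReal (exp α)) = ENNReal.ofReal (exp (α - β)) := by
    rw [ENNReal.ofReal_exp_sub, hα, ENNReal.eq_div_iff hs ENNReal.ofReal_ne_top, ← hfix]
  rw [← hα, ENNReal.log_ofReal_exp, EReal.coe_mul_sub_eq_mul y α β hy.ne',
    ← ENNReal.log_ofReal_exp (α - β), ← hf]
  exact mul_le_mul_of_nonneg_left (le_iSup (fun α => ((α * ((y - 1) / y) : ℝ) : EReal) -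
    ENNReal.log (pgf p (ENNReal.ofReal (exp α)))) α) (by exact_mod_cast hy.le)

theorem mul_cramerRate_le_cramerRate (hmin : ∀ s u, s * pgf p u ≤ u → pgf q s ≤ u)
    (hp : ∀ t, t ≠ 0 → pgf p t ≠ 0) (hy : 0 < y) :
    y * cramerRate p ((y - 1) / y) ≤ cramerRate q y := by
  rw [mul_comm, ← EReal.le_div_iff_mul_le (by exact_mod_cast hy) (EReal.coe_ne_top y)]
  refine iSup_le fun α => ?_
  rw [EReal.le_div_iff_mul_le (by exact_mod_cast hy) (EReal.coe_ne_top y)]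
  set t := ENNReal.ofReal (exp α)
  rcases eq_or_ne (pgf p t) ⊤ with htop | htop
  · simp [htop, EReal.bot_mul_of_pos (EReal.coe_pos.mpr hy)]
  obtain ⟨γ, hγ⟩ := ENNReal.exists_ofReal_exp_eq (hp t (by positivity)) htop
  set β := α - γ
  have hs : ENNReal.ofReal (exp β) * pgf p t = t := by
    rw [ENNReal.ofReal_exp_sub, ← hγ, ENNReal.div_mul_cancel (by positivity) ENNReal.ofReal_ne_top]
  have hlog : ENNReal.log (pgf q (ENNReal.ofReal (exp β))) ≤ α :=
    ENNReal.log_ofReal_exp α ▸ ENNReal.log_monotone (hmin _ _ hs.le)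
  calc _ = ((β * y : ℝ) : EReal) - α := by
        rw [← hγ, ENNReal.log_ofReal_exp, EReal.coe_mul_sub_eq_mul y α β hy.ne', sub_sub_cancel,
          mul_comm]
    _ ≤ ((β * y : ℝ) : EReal) - ENNReal.log (pgf q (ENNReal.ofReal (exp β))) :=
        EReal.sub_le_sub le_rfl hlog
    _ ≤ cramerRate q y := le_iSup (fun β => ((β * y : ℝ) : EReal) -
        ENNReal.log (pgf q (ENNReal.ofReal (exp β)))) β

end CramerRate

theorem cramerRate_totalProgeny_eq_general
    (p q : ℕ → ℝ≥0∞) (hp : ∑' h : ℕ, p h = 1) (hq : ∑' k : ℕ, q k = 1)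
    (hfe : ∀ s : ℝ≥0∞, s ≤ 1 → pgf q s = s * pgf p (pgf q s)) :
    ∀ y : ℝ, 1 ≤ y →
      cramerRate q y = (y : EReal) * cramerRate p ((y - 1) / y) := by
  have hprogeny := IsTotalProgenyLaw.of_pgf_eq hp hq hfe
  have hp0 : p ≠ 0 := by rintro rfl; simp at hp
  have hq0 : q ≠ 0 := by rintro rfl; simp at hq
  intro y hy
  have hy0 : 0 < y := by linarith
  exact le_antisymm (cramerRate_le_mul_cramerRate hprogeny.pgf_eq (fun _ => pgf_ne_zero hq0) hy0)
    (mul_cramerRate_le_cramerRate (fun _ _ => hprogeny.pgf_le_of_mul_pgf_le)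
      (fun _ => pgf_ne_zero hp0) hy0)

/-- Rate function identity (Proposition 3.1): if `p` is an offspring pmf with `p 0 > 0` and
mean `≤ 1`, and `q` is the pmf of the total progeny of the associated Galton--Watson process
with unit initial population (characterized by the pgf functional equation
`G(s) = s f(G(s))` on `[0,1]`), then the Cramér rate functions satisfy
`I_G(y) = y ⬝ I_f((y-1)/y)` for all `y ≥ 1`. -/
theorem cramerRate_totalProgeny_eq
    (p q : ℕ → ℝ≥0∞) (hp : ∑' h : ℕ, p h = 1) (hq : ∑' k : ℕ, q k = 1)
    (h0 : 0 < p 0) (hmean : ∑' h : ℕ, (h : ℝ≥0∞) * p h ≤ 1)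
    (hfe : ∀ s : ℝ≥0∞, s ≤ 1 → pgf q s = s * pgf p (pgf q s)) :
    ∀ y : ℝ, 1 ≤ y →
      cramerRate q y = (y : EReal) * cramerRate p ((y - 1) / y) :=
  cramerRate_totalProgeny_eq_general p q hp hq hfe
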